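/- There exist absolute constants C, c₀ > 0 such that for all nonnegative integers d, m, k with k ≤ d/2 and |d/2 − m| ≤ d/4, the normalized Kravchuk polynomial satisfies |K(d, m, k)| ≤ C·exp(−c₀·k). -/

import Mathlib

/-- The normalized Kravchuk polynomial
`K(n, a, b) = (1/(C(n,a)·C(n,b))) · Σ_{A,B ⊆ [n], |A|=a, |B|=b} (−1)^{|A ∩ B|}`. -/
noncomputable def krav (n a b : ℕ) : ℝ :=
  (∑ A ∈ Finset.powersetCard a (Finset.univ : Finset (Fin n)),
      ∑ B ∈ Finset.powersetCard b (Finset.univ : Finset (Fin n)),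
        (-1 : ℝ) ^ (A ∩ B).card) /
    ((n.choose a) * (n.choose b))

/-!
Write `K_b = K(n, a, b)`. For `|A| = a`, the sums `∑_{|B| = b} (-1)^{|A ∩ B|}` are the
coefficients of `f = (1 - X)^a (1 + X)^(n - a)`, and `(1 - X²) f' = ((n - 2a) - nX) f` yields the three-term
recurrence `(n - b - 1) K_{b+2} = (n - 2a) K_{b+1} - (b + 1) K_b`. As `|n - 2a| ≤ n/2`, it contracts
while `b ≤ n/5`, giving `|K_b| ≤ e^{-b/20}`.

For `n/5 < b ≤ n/2` we use orthogonality of the characters `A ↦ (-1)^{|A ∩ B|}` instead: Parseval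
gives `K_b² ≤ 2ⁿ / (C(n,a) C(n,b))`, and the entropy bound `C(n,j) ≥ e^{n H(j/n)} / (n + 1)`
together with `H(1/4) + H(1/5) > log 2` makes this exponentially small in `n ≥ b`.
-/

open Finset Polynomial Real

noncomputable def kravGen (n a : ℕ) : ℝ[X] := (1 - X) ^ a * (1 + X) ^ (n - a)

section CharacterSums

variable {ι : Type*} [DecidableEq ι]

lemma prod_ite_mem_neg_one (A B : Finset ι) :
    ∏ i ∈ B, (if i ∈ A then (-1 : ℝ) else 1) = (-1) ^ #(A ∩ B) := by
  rw [prod_ite, prod_const, prod_const, one_pow, mul_one, filter_mem_eq_inter, inter_comm]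

variable [Fintype ι]

lemma sum_powersetCard_neg_one_pow_inter {A : Finset ι} {a : ℕ} (hA : #A = a) (b : ℕ) :
    ∑ B ∈ powersetCard b univ, (-1 : ℝ) ^ #(A ∩ B) = (kravGen (Fintype.card ι) a).coeff b := by
  set s : ι → ℝ := fun i ↦ if i ∈ A then -1 else 1
  have hgen : kravGen (Fintype.card ι) a = ∏ i, (1 + C (s i) * X) := by
    have hfactor : ∀ i, 1 + C (s i) * X = if i ∈ A then 1 - X else 1 + X := fun i ↦ by
      by_cases hi : i ∈ A <;> simp [s, hi, sub_eq_add_neg]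
    rw [kravGen, prod_congr rfl fun i _ ↦ hfactor i, prod_ite, prod_const, prod_const]
    congr 2 <;> simp [← hA, filter_not, ← compl_eq_univ_sdiff, card_compl]
  have hexp : ∏ i, (1 + C (s i) * X) = ∑ B ∈ univ.powerset, C ((-1 : ℝ) ^ #(A ∩ B)) * X ^ #B := by
    rw [prod_one_add]
    refine sum_congr rfl fun B _ ↦ ?_
    rw [prod_mul_distrib, prod_const, ← map_prod, prod_ite_mem_neg_one]
  rw [hgen, hexp, finsetSum_coeff, powersetCard_eq_filter, sum_filter]
  refine sum_congr rfl fun B _ ↦ ?_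
  rw [coeff_C_mul_X_pow]
  simp only [eq_comm]

lemma sum_powerset_neg_one_pow_inter_mul (B B' : Finset ι) :
    ∑ A ∈ univ.powerset, (-1 : ℝ) ^ #(A ∩ B) * (-1) ^ #(A ∩ B') =
      if B = B' then 2 ^ Fintype.card ι else 0 := by
  set t : ι → ℝ := fun i ↦ (if i ∈ B then -1 else 1) * (if i ∈ B' then -1 else 1)
  have hprod : ∀ A : Finset ι, (-1 : ℝ) ^ #(A ∩ B) * (-1) ^ #(A ∩ B') = ∏ i ∈ A, t i := fun A ↦ by
    rw [prod_mul_distrib, prod_ite_mem_neg_one, prod_ite_mem_neg_one, inter_comm B, inter_comm B']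
  simp only [hprod, ← prod_one_add]
  split_ifs with h
  · subst h
    rw [prod_congr rfl fun i _ ↦ show 1 + t i = 2 by by_cases hi : i ∈ B <;> norm_num [t, hi],
      prod_const, card_univ]
  · obtain ⟨i, hi⟩ : ∃ i, ¬(i ∈ B ↔ i ∈ B') := by
      by_contra! hc
      exact h (ext hc)
    refine prod_eq_zero (mem_univ i) ?_
    by_cases hB : i ∈ B <;> by_cases hB' : i ∈ B' <;> simp_all [t]

lemma sum_powerset_sq_sum_powersetCard (b : ℕ) :
    ∑ A ∈ (univ : Finset ι).powerset, (∑ B ∈ powersetCard b univ, (-1 : ℝ) ^ #(A ∩ B)) ^ 2 =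
      2 ^ Fintype.card ι * (Fintype.card ι).choose b := by
  simp only [sq, sum_mul_sum]
  rw [sum_comm, sum_congr rfl fun B hB ↦ by
    rw [sum_comm, sum_congr rfl fun B' _ ↦ sum_powerset_neg_one_pow_inter_mul B B', sum_ite_eq,
      if_pos hB]]
  simp [card_powersetCard, mul_comm]

end CharacterSums

lemma krav_eq_coeff_div {n a : ℕ} (ha : a ≤ n) (b : ℕ) :
    krav n a b = (kravGen n a).coeff b / n.choose b := by
  have hinner : ∀ A ∈ powersetCard a (univ : Finset (Fin n)),
      ∑ B ∈ powersetCard b univ, (-1 : ℝ) ^ #(A ∩ B) = (kravGen n a).coeff b := fun A hA ↦ by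
    simpa using sum_powersetCard_neg_one_pow_inter (mem_powersetCard.mp hA).2 b
  rw [krav, sum_congr rfl hinner, sum_const, card_powersetCard, card_univ, Fintype.card_fin,
    nsmul_eq_mul, mul_div_mul_left _ _ (by exact_mod_cast (Nat.choose_pos ha).ne')]

lemma choose_mul_sq_coeff_kravGen_le (n a b : ℕ) :
    n.choose a * (kravGen n a).coeff b ^ 2 ≤ 2 ^ n * n.choose b := by
  calc n.choose a * (kravGen n a).coeff b ^ 2
      = ∑ A ∈ powersetCard a (univ : Finset (Fin n)),
          (∑ B ∈ powersetCard b univ, (-1 : ℝ) ^ #(A ∩ B)) ^ 2 := by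
        rw [sum_congr rfl fun A hA ↦ by
          rw [sum_powersetCard_neg_one_pow_inter (mem_powersetCard.mp hA).2, Fintype.card_fin]]
        simp
    _ ≤ ∑ A ∈ (univ : Finset (Fin n)).powerset,
          (∑ B ∈ powersetCard b univ, (-1 : ℝ) ^ #(A ∩ B)) ^ 2 :=
        sum_le_sum_of_subset_of_nonneg (fun _ hA ↦ mem_powerset.mpr (mem_powersetCard.mp hA).1)
          fun _ _ _ ↦ sq_nonneg _
    _ = 2 ^ n * n.choose b := by simpa using sum_powerset_sq_sum_powersetCard (ι := Fin n) b

lemma krav_sq_le {n a b : ℕ} (ha : a ≤ n) (hb : b ≤ n) :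
    krav n a b ^ 2 ≤ 2 ^ n / (n.choose a * n.choose b) := by
  have hCa : (0 : ℝ) < n.choose a := by exact_mod_cast Nat.choose_pos ha
  have hCb : (0 : ℝ) < n.choose b := by exact_mod_cast Nat.choose_pos hb
  rw [krav_eq_coeff_div ha, div_pow, div_le_div_iff₀ (by positivity) (by positivity)]
  nlinarith [choose_mul_sq_coeff_kravGen_le n a b]

lemma mul_derivative_pow {R : Type*} [CommRing R] (p : R[X]) (m : ℕ) :
    p * derivative (p ^ m) = C (m : R) * derivative p * p ^ m := by
  cases m with
  | zero => simp
  | succ m => rw [derivative_pow_succ, pow_succ, Nat.cast_succ]; ring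

lemma one_sub_X_sq_mul_derivative_kravGen {n a : ℕ} (ha : a ≤ n) :
    (1 - X ^ 2) * derivative (kravGen n a) =
      (C ((n : ℝ) - 2 * a) - C (n : ℝ) * X) * kravGen n a := by
  have h1 := mul_derivative_pow (1 - X : ℝ[X]) a
  have h2 := mul_derivative_pow (1 + X : ℝ[X]) (n - a)
  rw [Nat.cast_sub ha] at h2
  rw [kravGen, derivative_mul]
  simp only [derivative_add, derivative_one, derivative_X, map_sub, map_mul,
    map_natCast, map_ofNat] at h1 h2 ⊢
  linear_combination (1 + X) * (1 + X) ^ (n - a) * h1 + (1 - X) * (1 - X) ^ a * h2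

lemma coeff_kravGen_zero (n a : ℕ) : (kravGen n a).coeff 0 = 1 := by
  simp [kravGen, coeff_zero_eq_eval_zero]

lemma coeff_kravGen_one {n a : ℕ} (ha : a ≤ n) : (kravGen n a).coeff 1 = n - 2 * a := by
  have h := congrArg (coeff · 0) (one_sub_X_sq_mul_derivative_kravGen ha)
  simpa [sub_mul, mul_assoc, coeff_derivative, coeff_kravGen_zero, coeff_C_mul] using h

lemma coeff_kravGen_add_two {n a : ℕ} (ha : a ≤ n) (b : ℕ) :
    (b + 2) * (kravGen n a).coeff (b + 2) =
      (n - 2 * a) * (kravGen n a).coeff (b + 1) - (n - b) * (kravGen n a).coeff b := by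
  have h := congrArg (coeff · (b + 1)) (one_sub_X_sq_mul_derivative_kravGen ha)
  simp only [sub_mul, one_mul, coeff_sub, coeff_derivative, coeff_C_mul, mul_assoc, coeff_X_mul,
    coeff_X_pow_mul'] at h
  rcases b with _ | b
  · norm_num at h ⊢
    linarith
  · simp [add_assoc] at h
    push_cast at h ⊢
    linarith

lemma krav_zero {n a : ℕ} (ha : a ≤ n) : krav n a 0 = 1 := by
  simp [krav_eq_coeff_div ha, coeff_kravGen_zero]

lemma krav_one {n a : ℕ} (ha : a ≤ n) : krav n a 1 = (n - 2 * a) / n := by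
  rw [krav_eq_coeff_div ha, coeff_kravGen_one ha, Nat.choose_one_right]

lemma krav_add_two {n a b : ℕ} (ha : a ≤ n) (hb : b + 2 ≤ n) :
    (n - b - 1) * krav n a (b + 2) = (n - 2 * a) * krav n a (b + 1) - (b + 1) * krav n a b := by
  have hchoose : ∀ j, j ≤ n → (n.choose (j + 1) : ℝ) * (j + 1) = n.choose j * (n - j) :=
    fun j hj ↦ by rw [← Nat.cast_sub hj]; exact_mod_cast Nat.choose_succ_right_eq n j
  have hcoeff : ∀ j, j ≤ n → (kravGen n a).coeff j = n.choose j * krav n a j := fun j hj ↦ by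
    rw [krav_eq_coeff_div ha, mul_div_cancel₀ _ (by exact_mod_cast (Nat.choose_pos hj).ne')]
  have hrec := coeff_kravGen_add_two ha b
  rw [hcoeff b (by omega), hcoeff (b + 1) (by omega), hcoeff (b + 2) hb] at hrec
  have h1 := hchoose (b + 1) (by omega)
  have h0 := hchoose b (by omega)
  push_cast at h1
  refine mul_left_cancel₀ (by exact_mod_cast (Nat.choose_pos (by omega : b + 1 ≤ n)).ne' :
    (n.choose (b + 1) : ℝ) ≠ 0) ?_
  linear_combination hrec - krav n a (b + 2) * h1 + krav n a b * h0

lemma abs_krav_le_pow {n a : ℕ} (ha : |(n : ℝ) / 2 - a| ≤ n / 4) {ρ : ℝ} (hρ : 19 / 20 ≤ ρ)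
    (b : ℕ) : 5 * b ≤ n → |krav n a b| ≤ ρ ^ b := by
  have han : a ≤ n := by
    have := (abs_le.mp ha).1
    exact_mod_cast (by linarith : (a : ℝ) ≤ n)
  have hs : |(n : ℝ) - 2 * a| ≤ n / 2 := by
    rw [abs_le] at ha ⊢
    constructor <;> linarith
  induction b using Nat.twoStepInduction with
  | zero => simp [krav_zero han]
  | one =>
    intro h5
    have hn : (0 : ℝ) < n := by exact_mod_cast (by omega : 0 < n)
    rw [krav_one han, abs_div, abs_of_pos hn, div_le_iff₀ hn, pow_one]
    nlinarith
  | more b ih0 ih1 =>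
    intro h5
    have hb : (5 : ℝ) * b + 10 ≤ n := by exact_mod_cast (by omega : 5 * b + 10 ≤ n)
    have hpos : (0 : ℝ) < n - b - 1 := by linarith
    have hρ0 : 0 ≤ ρ := by linarith
    have hkey : (n / 2 * ρ + (b + 1) : ℝ) ≤ ρ ^ 2 * (n - b - 1) := by
      have hD : (0 : ℝ) ≤ 19 / 20 * (n - b - 1) - n / 2 := by linarith
      nlinarith [mul_nonneg (sub_nonneg.mpr hρ) (mul_nonneg hρ0 hpos.le),
        mul_nonneg (sub_nonneg.mpr hρ) hD]
    refine le_of_mul_le_mul_left ?_ hpos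
    calc ((n : ℝ) - b - 1) * |krav n a (b + 2)|
        = |(n - 2 * a) * krav n a (b + 1) - (b + 1) * krav n a b| := by
          rw [← krav_add_two han (by omega), abs_mul, abs_of_pos hpos]
      _ ≤ |(n : ℝ) - 2 * a| * |krav n a (b + 1)| + (b + 1) * |krav n a b| := by
          refine (abs_sub _ _).trans_eq ?_
          rw [abs_mul, abs_mul, abs_of_pos (by positivity : (0 : ℝ) < b + 1)]
      _ ≤ n / 2 * ρ ^ (b + 1) + (b + 1) * ρ ^ b := by
          gcongr
          exacts [ih1 (by omega), ih0 (by omega)]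
      _ = ρ ^ b * (n / 2 * ρ + (b + 1)) := by ring
      _ ≤ ρ ^ b * (ρ ^ 2 * (n - b - 1)) := by gcongr
      _ = (n - b - 1) * ρ ^ (b + 2) := by ring

def binomialTerm (n k j : ℕ) : ℕ := n.choose j * k ^ j * (n - k) ^ (n - j)

section BinomialTerm

variable {n k : ℕ}

lemma sum_binomialTerm (hk : k ≤ n) : ∑ j ∈ range (n + 1), binomialTerm n k j = n ^ n := by
  have h := add_pow k (n - k) n
  rw [Nat.add_sub_cancel' hk] at h
  rw [h]
  exact sum_congr rfl fun j _ ↦ by rw [binomialTerm, Nat.cast_id]; ring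

lemma binomialTerm_succ_mul {j : ℕ} (hj : j < n) :
    binomialTerm n k (j + 1) * ((j + 1) * (n - k)) = binomialTerm n k j * (k * (n - j)) := by
  obtain ⟨m, hm⟩ : ∃ m, n - j = m + 1 := ⟨n - j - 1, by omega⟩
  have hm' : n - (j + 1) = m := by omega
  rw [binomialTerm, binomialTerm, hm', hm, pow_succ, pow_succ]
  have := Nat.choose_succ_right_eq n j
  rw [hm] at this
  calc n.choose (j + 1) * (k ^ j * k) * (n - k) ^ m * ((j + 1) * (n - k))
      = n.choose (j + 1) * (j + 1) * (k ^ j * k * ((n - k) ^ m * (n - k))) := by ring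
    _ = _ := by rw [this]; ring

lemma binomialTerm_le_succ (hk : k ≤ n) {j : ℕ} (hj : j < k) :
    binomialTerm n k j ≤ binomialTerm n k (j + 1) := by
  rcases hk.lt_or_eq with hk | rfl
  · refine Nat.le_of_mul_le_mul_right (c := (j + 1) * (n - k)) ?_
      (Nat.mul_pos j.succ_pos (by omega))
    rw [binomialTerm_succ_mul (by omega)]
    gcongr
    omega
  · simp [binomialTerm, zero_pow (by omega : k - j ≠ 0)]

lemma binomialTerm_succ_le {j : ℕ} (hkj : k ≤ j) (hj : j < n) :
    binomialTerm n k (j + 1) ≤ binomialTerm n k j := by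
  refine Nat.le_of_mul_le_mul_right (c := (j + 1) * (n - k)) ?_ (Nat.mul_pos j.succ_pos (by omega))
  rw [binomialTerm_succ_mul hj]
  gcongr
  omega

lemma binomialTerm_le_self (hk : k ≤ n) (j : ℕ) : binomialTerm n k j ≤ binomialTerm n k k := by
  rcases le_or_gt j k with hjk | hkj
  · induction hjk using Nat.decreasingInduction with
    | self => rfl
    | of_succ j hj ih => exact (binomialTerm_le_succ hk hj).trans ih
  rcases le_or_gt j n with hjn | hnj
  · induction j, hkj using Nat.le_induction with
    | base => exact binomialTerm_succ_le le_rfl (by omega)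
    | succ j hkj ih => exact (binomialTerm_succ_le (by omega) (by omega)).trans (ih (by omega))
  · simp [binomialTerm, Nat.choose_eq_zero_of_lt hnj]

lemma pow_le_succ_mul_binomialTerm (hk : k ≤ n) : n ^ n ≤ (n + 1) * binomialTerm n k k := by
  calc n ^ n = ∑ j ∈ range (n + 1), binomialTerm n k j := (sum_binomialTerm hk).symm
    _ ≤ ∑ _j ∈ range (n + 1), binomialTerm n k k := sum_le_sum fun j _ ↦ binomialTerm_le_self hk j
    _ = (n + 1) * binomialTerm n k k := by rw [sum_const, card_range, smul_eq_mul]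

end BinomialTerm

lemma exp_mul_log_div_mul_pow {x y : ℝ} (hx : 0 < x) (hy : 0 < y) (m : ℕ) :
    exp (m * log (y / x)) * x ^ m = y ^ m := by
  rw [← log_pow, exp_log (by positivity), div_pow, div_mul_cancel₀ _ (by positivity)]

lemma exp_mul_binEntropy_mul_pow {n k : ℕ} (hk0 : 0 < k) (hkn : k < n) :
    exp (n * binEntropy (k / n)) * (k ^ k * (n - k) ^ (n - k)) = (n : ℝ) ^ n := by
  obtain ⟨m, rfl⟩ : ∃ m, n = k + m := ⟨n - k, by omega⟩
  have hk : (0 : ℝ) < k := by exact_mod_cast hk0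
  have hm : (0 : ℝ) < m := by exact_mod_cast (by omega : 0 < m)
  have hentropy : ((k + m : ℕ) : ℝ) * binEntropy (k / (k + m : ℕ)) =
      k * log ((k + m) / k) + m * log ((k + m) / m) := by
    push_cast
    rw [binEntropy, one_sub_div (by positivity : (k + m : ℝ) ≠ 0), add_sub_cancel_left, inv_div,
      inv_div]
    field_simp
  rw [hentropy, exp_add, Nat.add_sub_cancel_left]
  push_cast
  rw [add_sub_cancel_left]
  calc exp (k * log ((k + m) / k)) * exp (m * log ((k + m) / m)) * (k ^ k * m ^ m)
      = (exp (k * log ((k + m) / k)) * k ^ k) * (exp (m * log ((k + m) / m)) * m ^ m) := by ring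
    _ = (k + m : ℝ) ^ (k + m) := by
      rw [exp_mul_log_div_mul_pow hk (by positivity), exp_mul_log_div_mul_pow hm (by positivity),
        pow_add]

lemma exp_mul_binEntropy_le_choose {n k : ℕ} (hk0 : 0 < k) (hkn : k < n) :
    exp (n * binEntropy (k / n)) ≤ (n + 1) * n.choose k := by
  have hkn' : (k : ℝ) < n := by exact_mod_cast hkn
  have hpos : (0 : ℝ) < k ^ k * (n - k) ^ (n - k) := by
    have : (0 : ℝ) < k := by exact_mod_cast hk0
    have : (0 : ℝ) < n - k := by linarith
    positivity
  refine le_of_mul_le_mul_right ?_ hpos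
  rw [exp_mul_binEntropy_mul_pow hk0 hkn, ← Nat.cast_sub hkn.le]
  exact_mod_cast (pow_le_succ_mul_binomialTerm hkn.le).trans_eq (by rw [binomialTerm]; ring)

lemma two_pow_mul_exp_le_choose_mul_choose {n a k : ℕ} {c : ℝ} (ha0 : 0 < a) (han : a < n)
    (hk0 : 0 < k) (hkn : k < n) (hH : log 2 + c ≤ binEntropy (a / n) + binEntropy (k / n)) :
    2 ^ n * exp (c * n) ≤ (n + 1) ^ 2 * (n.choose a * n.choose k) :=
  calc (2 : ℝ) ^ n * exp (c * n) = exp (n * (log 2 + c)) := by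
        rw [mul_add, exp_add, exp_nat_mul, exp_log two_pos, mul_comm (n : ℝ)]
    _ ≤ exp (n * binEntropy (a / n)) * exp (n * binEntropy (k / n)) := by
        rw [← exp_add, ← mul_add]
        gcongr
    _ ≤ (n + 1) * n.choose a * ((n + 1) * n.choose k) :=
        mul_le_mul (exp_mul_binEntropy_le_choose ha0 han) (exp_mul_binEntropy_le_choose hk0 hkn)
          (exp_pos _).le (by positivity)
    _ = (n + 1) ^ 2 * (n.choose a * n.choose k) := by ring

lemma binEntropy_le_of_mem_Icc {p q : ℝ} (hq : 0 ≤ q) (hp : p ∈ Set.Icc q (1 - q)) :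
    binEntropy q ≤ binEntropy p := by
  have hq1 : q ≤ 1 - q := hp.1.trans hp.2
  have h := strictConcave_binEntropy.concaveOn.min_le_of_mem_Icc ⟨hq, by linarith⟩
    ⟨by linarith, by linarith⟩ hp
  rwa [binEntropy_one_sub, min_self] at h

lemma log_two_add_le_binEntropy : log 2 + 3 / 10 ≤ binEntropy (1 / 4) + binEntropy (1 / 5) := by
  have hlog4 : log 4 = 2 * log 2 := by
    rw [show (4 : ℝ) = 2 ^ 2 by norm_num, log_pow, Nat.cast_ofNat]
  have hlog3 : 5 * log 3 ≤ 8 * log 2 := by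
    simpa using log_le_log (by norm_num) (show (3 : ℝ) ^ 5 ≤ 2 ^ 8 by norm_num)
  have hlog5 : 16 * log 2 ≤ 7 * log 5 := by
    simpa using log_le_log (by norm_num) (show (2 : ℝ) ^ 16 ≤ 5 ^ 7 by norm_num)
  have h43 : log (4 / 3) = log 4 - log 3 := log_div (by norm_num) (by norm_num)
  have h54 : log (5 / 4) = log 5 - log 4 := log_div (by norm_num) (by norm_num)
  norm_num [binEntropy, h43, h54, hlog4]
  linarith [log_two_gt_d9]

lemma abs_krav_le_exp {n a k : ℕ} (ha : |(n : ℝ) / 2 - a| ≤ n / 4) (hk : 2 * k ≤ n)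
    (hk' : n < 5 * k) : |krav n a k| ≤ (n + 1) * exp (-(3 / 20 * n)) := by
  have hn : (0 : ℝ) < n := by exact_mod_cast (by omega : 0 < n)
  have hkR : (n : ℝ) < 5 * k ∧ 2 * (k : ℝ) ≤ n := by constructor <;> exact_mod_cast (by omega)
  obtain ⟨ha1, ha2⟩ := abs_le.mp ha
  have ha0 : 0 < a := by exact_mod_cast (by linarith : (0 : ℝ) < a)
  have han : a < n := by exact_mod_cast (by linarith : (a : ℝ) < n)
  have hHa : binEntropy (1 / 4) ≤ binEntropy (a / n) := binEntropy_le_of_mem_Icc (by norm_num)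
    ⟨by rw [le_div_iff₀ hn]; linarith, by rw [div_le_iff₀ hn]; linarith⟩
  have hHk : binEntropy (1 / 5) ≤ binEntropy (k / n) := binEntropy_le_of_mem_Icc (by norm_num)
    ⟨by rw [le_div_iff₀ hn]; linarith, by rw [div_le_iff₀ hn]; linarith⟩
  have hchoose := two_pow_mul_exp_le_choose_mul_choose ha0 han (by omega : 0 < k) (by omega)
    (by linarith [log_two_add_le_binEntropy] : log 2 + 3 / 10 ≤ _)
  have hCpos : (0 : ℝ) < n.choose a * n.choose k := by
    have := Nat.choose_pos han.le
    have := Nat.choose_pos (by omega : k ≤ n)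
    positivity
  refine abs_le_of_sq_le_sq ?_ (by positivity)
  calc krav n a k ^ 2 ≤ 2 ^ n / (n.choose a * n.choose k) := krav_sq_le han.le (by omega)
    _ ≤ ((n + 1) * exp (-(3 / 20 * n))) ^ 2 := by
      have hsq : exp (-(3 / 20 * n)) ^ 2 = exp (-(3 / 10 * n)) := by
        rw [← exp_nat_mul]
        ring_nf
      rw [mul_pow, hsq, div_le_iff₀ hCpos]
      calc (2 : ℝ) ^ n = 2 ^ n * exp (3 / 10 * n) * exp (-(3 / 10 * n)) := by
            rw [mul_assoc, ← exp_add, add_neg_cancel, exp_zero, mul_one]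
        _ ≤ (n + 1) ^ 2 * (n.choose a * n.choose k) * exp (-(3 / 10 * n)) := by gcongr
        _ = (n + 1) ^ 2 * exp (-(3 / 10 * n)) * (n.choose a * n.choose k) := by ring

theorem stmt_13 :
    ∃ C > (0 : ℝ), ∃ c₀ > (0 : ℝ), ∀ d m k : ℕ,
      (k : ℝ) ≤ (d : ℝ) / 2 → |(d : ℝ) / 2 - m| ≤ (d : ℝ) / 4 →
      |krav d m k| ≤ C * Real.exp (-c₀ * k) := by
  refine ⟨20, by norm_num, 1 / 20, by norm_num, fun d m k hk hm ↦ ?_⟩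
  rcases le_or_gt (5 * k) d with hsmall | hlarge
  · calc |krav d m k| ≤ exp (-(1 / 20)) ^ k :=
          abs_krav_le_pow hm (by linarith [add_one_le_exp (-(1 / 20))]) k hsmall
      _ = exp (-(1 / 20) * k) := by rw [← exp_nat_mul, mul_comm]
      _ ≤ 20 * exp (-(1 / 20) * k) := by linarith [exp_pos (-(1 / 20) * k)]
  · have hd : (d : ℝ) + 1 ≤ 20 * exp (d / 20) := by
      have := add_one_le_exp ((d + 1) / 20 - 1)
      have := exp_le_exp.mpr (by linarith : ((d : ℝ) + 1) / 20 - 1 ≤ d / 20)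
      linarith
    have h2k : 2 * k ≤ d := by exact_mod_cast (by push_cast; linarith : ((2 * k : ℕ) : ℝ) ≤ d)
    calc |krav d m k| ≤ (d + 1) * exp (-(3 / 20 * d)) := abs_krav_le_exp hm h2k hlarge
      _ ≤ 20 * exp (d / 20) * exp (-(3 / 20 * d)) := by gcongr
      _ = 20 * exp (-(1 / 10 * d)) := by rw [mul_assoc, ← exp_add]; ring_nf
      _ ≤ 20 * exp (-(1 / 20) * k) := by gcongr; linarith
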